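/- Let F = A^{1/m} be an m-th root Finsler metric on an open subset U ⊆ ℝⁿ with n ≥ 2, whose Hessian matrix (A_{ij}) is invertible, so the spray coefficients are G^i = (1/2)(A_{0j} − A_{x^j}) A^{ij}, and let E_{ij} = (1/2) ∂³G^k/∂y^i∂y^j∂y^k be the mean Berwald curvature. Suppose F is of isotropic mean Berwald curvature, i.e. there is a smooth scalar function c = c(x) on U such that E_{ij} = ((n+1)/2) c F^{−1} h_{ij} for all (x,y) with y ≠ 0, where h_{ij} = g_{ij} − F^{−2} (g_{ip} y^p)(g_{jq} y^q) is the angular metric. Then c = 0 and E_{ij} = 0, i.e. F is a weakly Berwald metric. -/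

import Mathlib

open scoped BigOperators

/-- Partial derivative of `f x y` with respect to `y^l` (the second argument). -/
noncomputable def pdy {n : ℕ} (f : (Fin n → ℝ) → (Fin n → ℝ) → ℝ) (l : Fin n) :
    (Fin n → ℝ) → (Fin n → ℝ) → ℝ :=
  fun x y => fderiv ℝ (f x) y (Pi.single l 1)

/-- Partial derivative of `f x y` with respect to `x^l` (the first argument). -/
noncomputable def pdx {n : ℕ} (f : (Fin n → ℝ) → (Fin n → ℝ) → ℝ) (l : Fin n) :
    (Fin n → ℝ) → (Fin n → ℝ) → ℝ :=
  fun x y => fderiv ℝ (fun x' => f x' y) x (Pi.single l 1)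

/-- Spray coefficients `G^i = (1/2)(A_{0j} − A_{x^j}) A^{ij}` of an `m`-th root metric. -/
noncomputable def sprayG {n : ℕ} (A : (Fin n → ℝ) → (Fin n → ℝ) → ℝ)
    (Ainv : (Fin n → ℝ) → (Fin n → ℝ) → Matrix (Fin n) (Fin n) ℝ) (i : Fin n) :
    (Fin n → ℝ) → (Fin n → ℝ) → ℝ :=
  fun x y =>
    (1 / 2) * ∑ j, ((∑ k, pdy (pdx A k) j x y * y k) - pdx A j x y) * Ainv x y i j

/-- Mean Berwald curvature `E_{ij} = (1/2) ∂³G^k/∂y^i∂y^j∂y^k`. -/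
noncomputable def meanBerwald {n : ℕ} (A : (Fin n → ℝ) → (Fin n → ℝ) → ℝ)
    (Ainv : (Fin n → ℝ) → (Fin n → ℝ) → Matrix (Fin n) (Fin n) ℝ) (i j : Fin n) :
    (Fin n → ℝ) → (Fin n → ℝ) → ℝ :=
  fun x y => (1 / 2) * ∑ k, pdy (pdy (pdy (sprayG A Ainv k) k) j) i x y

/-- Fundamental tensor `g_{ij} = (1/2) ∂²(F²)/∂y^i∂y^j` of `F = A^{1/m}`. -/
noncomputable def fundTensor {n : ℕ} (m : ℕ) (A : (Fin n → ℝ) → (Fin n → ℝ) → ℝ)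
    (i j : Fin n) : (Fin n → ℝ) → (Fin n → ℝ) → ℝ :=
  fun x y => (1 / 2) * pdy (pdy (fun x' y' => A x' y' ^ ((2 : ℝ) / (m : ℝ))) j) i x y

/-- Angular metric `h_{ij} = g_{ij} − F^{−2} (g_{ip} y^p)(g_{jq} y^q)` of `F = A^{1/m}`. -/
noncomputable def angularMetric {n : ℕ} (m : ℕ) (A : (Fin n → ℝ) → (Fin n → ℝ) → ℝ)
    (i j : Fin n) : (Fin n → ℝ) → (Fin n → ℝ) → ℝ :=
  fun x y =>
    fundTensor m A i j x y
      - A x y ^ (-((2 : ℝ) / (m : ℝ))) *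
          (∑ p, fundTensor m A i p x y * y p) * (∑ q, fundTensor m A j q x y * y q)

variable {n : ℕ}

/-- derivative of `g ∘ neg`, robust to non-differentiability. -/
lemma fderiv_comp_neg_apply (g : (Fin n → ℝ) → ℝ) (y v : Fin n → ℝ) :
    fderiv ℝ (fun z => g (-z)) y v = -(fderiv ℝ g (-y) v) := by
  by_cases h : DifferentiableAt ℝ g (-y)
  · have hneg : HasFDerivAt (fun z : Fin n → ℝ => -z)
      (-(ContinuousLinearMap.id ℝ (Fin n → ℝ))) y := (hasFDerivAt_id y).neg
    have := (h.hasFDerivAt.comp y hneg).fderiv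
    rw [show ((fun z => g (-z)) = g ∘ (fun z : Fin n → ℝ => -z)) from rfl, this]
    simp
  · have h1 : fderiv ℝ g (-y) = 0 := fderiv_zero_of_not_differentiableAt h
    have h2 : ¬ DifferentiableAt ℝ (fun z => g (-z)) y := by
      intro hd
      apply h
      have hdneg : DifferentiableAt ℝ (fun z : Fin n → ℝ => -z) (-y) :=
        (hasFDerivAt_id (-y)).neg.differentiableAt
      have : DifferentiableAt ℝ (fun z => g (- -z)) (-y) := by
        have := DifferentiableAt.comp (g := fun z => g (-z))
          (f := fun z : Fin n → ℝ => -z) (-y) (by simpa using hd) hdneg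
        exact this
      simpa using this
    rw [fderiv_zero_of_not_differentiableAt h2, h1]
    simp

/-- if `g` is even near `±y`, its derivative is odd. -/
lemma fderiv_even_nbhd (g : (Fin n → ℝ) → ℝ) (y v : Fin n → ℝ)
    (h : ∀ᶠ z in nhds y, g (-z) = g z) :
    fderiv ℝ g (-y) v = -(fderiv ℝ g y v) := by
  have he : (fun z => g (-z)) =ᶠ[nhds y] g := Filter.eventuallyEq_of_mem (by exact h) (fun z hz => hz)
  have h1 : fderiv ℝ (fun z => g (-z)) y = fderiv ℝ g y := he.fderiv_eq
  have h2 := fderiv_comp_neg_apply g y v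
  rw [h1] at h2
  linarith

/-- if `g` is odd near `y`, its derivative is even. -/
lemma fderiv_odd_nbhd (g : (Fin n → ℝ) → ℝ) (y v : Fin n → ℝ)
    (h : ∀ᶠ z in nhds y, g (-z) = -g z) :
    fderiv ℝ g (-y) v = fderiv ℝ g y v := by
  have he : (fun z => g (-z)) =ᶠ[nhds y] (fun z => -g z) := Filter.eventuallyEq_of_mem (by exact h) (fun z hz => hz)
  have h1 : fderiv ℝ (fun z => g (-z)) y = fderiv ℝ (fun z => -g z) y := he.fderiv_eq
  have h2 := fderiv_comp_neg_apply g y v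
  rw [h1, fderiv_fun_neg] at h2
  simpa using h2.symm

lemma eventually_ne_zero {y : Fin n → ℝ} (hy : y ≠ 0) :
    ∀ᶠ z in nhds y, z ≠ (0 : Fin n → ℝ) :=
  (isOpen_compl_singleton).eventually_mem (by simpa using hy)

/-- even on `{z ≠ 0}` ⇒ derivative odd on `{z ≠ 0}`. -/
lemma fderiv_evenOn (g : (Fin n → ℝ) → ℝ) (h : ∀ z : Fin n → ℝ, z ≠ 0 → g (-z) = g z)
    {y : Fin n → ℝ} (hy : y ≠ 0) (v : Fin n → ℝ) :
    fderiv ℝ g (-y) v = -(fderiv ℝ g y v) :=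
  fderiv_even_nbhd g y v ((eventually_ne_zero hy).mono fun z hz => h z hz)

lemma fderiv_oddOn (g : (Fin n → ℝ) → ℝ) (h : ∀ z : Fin n → ℝ, z ≠ 0 → g (-z) = -g z)
    {y : Fin n → ℝ} (hy : y ≠ 0) (v : Fin n → ℝ) :
    fderiv ℝ g (-y) v = fderiv ℝ g y v :=
  fderiv_odd_nbhd g y v ((eventually_ne_zero hy).mono fun z hz => h z hz)

/-- Euler's identity from homogeneity along a ray. -/
lemma euler_identity {f : (Fin n → ℝ) → ℝ} {y : Fin n → ℝ} {d : ℕ}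
    (hf : DifferentiableAt ℝ f y)
    (h : ∀ t : ℝ, t ≠ 0 → f (t • y) = t ^ d * f y) :
    fderiv ℝ f y y = d * f y := by
  have hline : HasDerivAt (fun t : ℝ => t • y) ((1:ℝ) • y) 1 :=
    (hasDerivAt_id 1).smul_const y
  have h1 : HasDerivAt (fun t : ℝ => f (t • y)) (fderiv ℝ f y y) 1 := by
    have hf' : HasFDerivAt f (fderiv ℝ f y) ((1:ℝ) • y) := by
      rw [one_smul]; exact hf.hasFDerivAt
    have := hf'.comp_hasDerivAt (1:ℝ) (by simpa using hline)
    exact this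
  have h2 : HasDerivAt (fun t : ℝ => t ^ d * f y) ((d : ℝ) * 1 ^ (d - 1) * f y) 1 :=
    (hasDerivAt_pow d 1).mul_const (f y)
  have heq : (fun t : ℝ => f (t • y)) =ᶠ[nhds 1] (fun t : ℝ => t ^ d * f y) := by
    have : ∀ᶠ t : ℝ in nhds 1, t ≠ 0 :=
      (isOpen_compl_singleton).eventually_mem (by norm_num)
    exact this.mono fun t ht => h t ht
  have h1' : HasDerivAt (fun t : ℝ => t ^ d * f y) (fderiv ℝ f y y) 1 :=
    h1.congr_of_eventuallyEq heq.symm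
  have := h1'.unique h2
  simpa using this


noncomputable def ee (i : Fin n) : Fin n → ℝ := Pi.single i 1

lemma clm_apply_eq_sum (φ : (Fin n → ℝ) →L[ℝ] ℝ) (z : Fin n → ℝ) :
    φ z = ∑ i, z i * φ (ee i) := by
  have hz : z = ∑ i, Pi.single i (z i) := (Finset.univ_sum_single z).symm
  conv_lhs => rw [hz]
  rw [map_sum]
  refine Finset.sum_congr rfl fun i _ => ?_
  have : Pi.single i (z i) = z i • ee i := by
    unfold ee
    rw [← Pi.single_smul]
    simp
  rw [this, map_smul]
  simp

section Homog

variable {f : (Fin n → ℝ) → ℝ} {m : ℕ}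

lemma fderiv_homog (hm1 : 1 ≤ m) (hf : Differentiable ℝ f)
    (hh : ∀ (t : ℝ) (z : Fin n → ℝ), f (t • z) = t ^ m * f z)
    {t : ℝ} (ht : t ≠ 0) (z v : Fin n → ℝ) :
    fderiv ℝ f (t • z) v = t ^ (m - 1) * fderiv ℝ f z v := by
  have hsm : HasFDerivAt (fun w : Fin n → ℝ => t • w)
      (t • ContinuousLinearMap.id ℝ (Fin n → ℝ)) z := (hasFDerivAt_id z).const_smul t
  have h1 : HasFDerivAt (fun w => f (t • w))
      ((fderiv ℝ f (t • z)).comp (t • ContinuousLinearMap.id ℝ (Fin n → ℝ))) z :=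
    (hf (t • z)).hasFDerivAt.comp z hsm
  have h2 : HasFDerivAt (fun w => f (t • w)) (t ^ m • fderiv ℝ f z) z := by
    have : (fun w => f (t • w)) = fun w => t ^ m * f w := by
      funext w; exact hh t w
    rw [this]
    exact (hf z).hasFDerivAt.const_smul (t ^ m)
  have h3 := h1.unique h2
  have h4 := congrFun (congrArg (fun (φ : (Fin n → ℝ) →L[ℝ] ℝ) => (φ : (Fin n → ℝ) → ℝ)) h3) v
  simp only [ContinuousLinearMap.coe_comp', Function.comp_apply, ContinuousLinearMap.coe_smul',
    Pi.smul_apply, ContinuousLinearMap.coe_id', id_eq, smul_eq_mul] at h4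
  -- h4 : fderiv ℝ f (t • z) (t • v) = t ^ m * fderiv ℝ f z v
  have h5 : t * fderiv ℝ f (t • z) v = t ^ m * fderiv ℝ f z v := by
    rw [← h4]
    rw [map_smul]
    simp
  obtain ⟨k, rfl⟩ : ∃ k, m = k + 1 := ⟨m - 1, by omega⟩
  have hm : t ^ (k + 1) = t * t ^ k := by rw [pow_succ]; ring
  rw [hm, mul_assoc] at h5
  have := mul_left_cancel₀ ht h5
  simpa using this

lemma pd_smooth (hf : ContDiff ℝ (⊤:ℕ∞) f) (v : Fin n → ℝ) :
    ContDiff ℝ (⊤:ℕ∞) (fun z => fderiv ℝ f z v) :=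
  (hf.fderiv_right (m := (⊤:ℕ∞)) (by exact_mod_cast le_top)).clm_apply contDiff_const

/-- Euler identity, coordinate form. -/
lemma euler_coord (hf : ContDiff ℝ (⊤:ℕ∞) f)
    (hh : ∀ (t : ℝ) (z : Fin n → ℝ), f (t • z) = t ^ m * f z) (y : Fin n → ℝ) :
    ∑ i, y i * fderiv ℝ f y (ee i) = m * f y := by
  rw [← clm_apply_eq_sum (fderiv ℝ f y) y]
  exact euler_identity (hf.differentiable (by simp) y) (fun t _ => hh t y)

/-- Euler identity for the first derivative, coordinate form. -/
lemma euler_coord_deriv (hm1 : 1 ≤ m) (hf : ContDiff ℝ (⊤:ℕ∞) f)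
    (hh : ∀ (t : ℝ) (z : Fin n → ℝ), f (t • z) = t ^ m * f z) (y v : Fin n → ℝ) :
    ∑ i, y i * fderiv ℝ (fun z => fderiv ℝ f z v) y (ee i)
      = ((m : ℝ) - 1) * fderiv ℝ f y v := by
  rw [← clm_apply_eq_sum (fderiv ℝ (fun z => fderiv ℝ f z v) y) y]
  have h := euler_identity (f := fun z => fderiv ℝ f z v) (y := y) (d := m - 1)
    ((pd_smooth hf v).differentiable (by simp) y)
    (fun t ht => fderiv_homog hm1 (hf.differentiable (by simp)) hh ht y v)
  rw [h]
  have : ((m - 1 : ℕ) : ℝ) = (m : ℝ) - 1 := by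
    have : (1:ℕ) ≤ m := hm1
    push_cast [Nat.cast_sub this]
    ring
  rw [this]

/-- symmetry of the second derivative. -/
lemma second_symm (hf : ContDiff ℝ (⊤:ℕ∞) f) (y v w : Fin n → ℝ) :
    fderiv ℝ (fun z => fderiv ℝ f z v) y w = fderiv ℝ (fun z => fderiv ℝ f z w) y v := by
  have hdf : Differentiable ℝ f := hf.differentiable (by simp)
  have hdf' : Differentiable ℝ (fderiv ℝ f) :=
    (hf.fderiv_right (m := (⊤:ℕ∞)) (by exact_mod_cast le_top)).differentiable (by simp)
  have hsym := second_derivative_symmetric (f := f) (f' := fderiv ℝ f)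
    (f'' := fderiv ℝ (fderiv ℝ f) y) (x := y)
    (fun z => (hdf z).hasFDerivAt) (hdf' y).hasFDerivAt
  have key : ∀ u r : Fin n → ℝ, fderiv ℝ (fun z => fderiv ℝ f z u) y r
      = fderiv ℝ (fderiv ℝ f) y r u := by
    intro u r
    have := fderiv_clm_apply (c := fderiv ℝ f) (u := fun _ => u) (x := y)
      (hdf' y) (differentiableAt_const u)
    have h2 := congrFun (congrArg (fun (φ : (Fin n → ℝ) →L[ℝ] ℝ) => (φ : (Fin n → ℝ) → ℝ)) this) r
    simpa using h2
  rw [key v w, key w v]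
  exact hsym w v

end Homog

/-- the polynomial `z ↦ ∑ ι, c ι * ∏ k, z (ι k)` is smooth. -/
lemma poly_contDiff {m : ℕ} (c : (Fin m → Fin n) → ℝ) :
    ContDiff ℝ (⊤:ℕ∞) (fun z : Fin n → ℝ => ∑ ι : Fin m → Fin n, c ι * ∏ k, z (ι k)) := by
  apply ContDiff.sum
  intro ι _
  apply ContDiff.mul contDiff_const
  induction (Finset.univ : Finset (Fin m)) using Finset.cons_induction with
  | empty => simpa using contDiff_const
  | cons a s ha ih =>
    simp only [Finset.prod_cons]
    exact ((ContinuousLinearMap.proj (ι a) : (Fin n → ℝ) →L[ℝ] ℝ).contDiff).mul ih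

/-- homogeneity of the polynomial. -/
lemma poly_homog {m : ℕ} (c : (Fin m → Fin n) → ℝ) (t : ℝ) (z : Fin n → ℝ) :
    ∑ ι : Fin m → Fin n, c ι * ∏ k, (t • z) (ι k)
      = t ^ m * ∑ ι : Fin m → Fin n, c ι * ∏ k, z (ι k) := by
  rw [Finset.mul_sum]
  refine Finset.sum_congr rfl fun ι _ => ?_
  have : ∀ k : Fin m, (t • z) (ι k) = t * z (ι k) := fun k => rfl
  simp only [this, Finset.prod_mul_distrib, Finset.prod_const, Finset.card_univ, Fintype.card_fin]
  ring

/- ## Parity lemmas -/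

lemma fderiv_even_global (g : (Fin n → ℝ) → ℝ) (h : ∀ z, g (-z) = g z) (z v : Fin n → ℝ) :
    fderiv ℝ g (-z) v = -(fderiv ℝ g z v) :=
  fderiv_even_nbhd g z v (Filter.Eventually.of_forall fun w => h w)

lemma fderiv_odd_global (g : (Fin n → ℝ) → ℝ) (h : ∀ z, g (-z) = -g z) (z v : Fin n → ℝ) :
    fderiv ℝ g (-z) v = fderiv ℝ g z v :=
  fderiv_odd_nbhd g z v (Filter.Eventually.of_forall fun w => h w)

section Parity

variable {A : (Fin n → ℝ) → (Fin n → ℝ) → ℝ}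
variable {Ainv : (Fin n → ℝ) → (Fin n → ℝ) → Matrix (Fin n) (Fin n) ℝ}
variable {U : Set (Fin n → ℝ)} {x : Fin n → ℝ}

lemma pdx_even (hU : IsOpen U) (hx : x ∈ U)
    (hAeven : ∀ x' ∈ U, ∀ z, A x' (-z) = A x' z) (j : Fin n) (z : Fin n → ℝ) :
    pdx A j x (-z) = pdx A j x z := by
  unfold pdx
  have he : (fun x' => A x' (-z)) =ᶠ[nhds x] (fun x' => A x' z) :=
    Filter.eventuallyEq_of_mem (hU.mem_nhds hx) (fun x' hx' => hAeven x' hx' z)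
  rw [he.fderiv_eq]

lemma pdy_pdx_odd (hU : IsOpen U) (hx : x ∈ U)
    (hAeven : ∀ x' ∈ U, ∀ z, A x' (-z) = A x' z) (k j : Fin n) (z : Fin n → ℝ) :
    pdy (pdx A k) j x (-z) = -(pdy (pdx A k) j x z) := by
  show fderiv ℝ (pdx A k x) (-z) _ = -(fderiv ℝ (pdx A k x) z _)
  exact fderiv_even_global _ (fun w => pdx_even hU hx hAeven k w) z _

lemma pdy_A_odd (hAx : ∀ z, A x (-z) = A x z) (j : Fin n) (z : Fin n → ℝ) :
    pdy A j x (-z) = -(pdy A j x z) := by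
  show fderiv ℝ (A x) (-z) _ = -(fderiv ℝ (A x) z _)
  exact fderiv_even_global _ hAx z _

lemma hess_even (hAx : ∀ z, A x (-z) = A x z) (i j : Fin n) (z : Fin n → ℝ) :
    pdy (pdy A j) i x (-z) = pdy (pdy A j) i x z := by
  show fderiv ℝ (pdy A j x) (-z) _ = fderiv ℝ (pdy A j x) z _
  exact fderiv_odd_global _ (fun w => pdy_A_odd hAx j w) z _

lemma ainv_even (hx : x ∈ U)
    (hAinv : ∀ x' ∈ U, ∀ y : Fin n → ℝ, y ≠ 0 →
      (Matrix.of fun i j => pdy (pdy A j) i x' y) * Ainv x' y = 1 ∧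
      Ainv x' y * (Matrix.of fun i j => pdy (pdy A j) i x' y) = 1)
    (hAx : ∀ z, A x (-z) = A x z) {y : Fin n → ℝ} (hy : y ≠ 0) :
    Ainv x (-y) = Ainv x y := by
  have hMeq : (Matrix.of fun i j => pdy (pdy A j) i x (-y))
      = (Matrix.of fun i j => pdy (pdy A j) i x y) := by
    ext i j
    exact hess_even hAx i j y
  obtain ⟨h1, _⟩ := hAinv x hx y hy
  obtain ⟨_, h2'⟩ := hAinv x hx (-y) (neg_ne_zero.mpr hy)
  rw [hMeq] at h2'
  calc Ainv x (-y) = Ainv x (-y) * ((Matrix.of fun i j => pdy (pdy A j) i x y) * Ainv x y) := by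
        rw [h1, mul_one]
    _ = (Ainv x (-y) * (Matrix.of fun i j => pdy (pdy A j) i x y)) * Ainv x y := by
        rw [mul_assoc]
    _ = Ainv x y := by rw [h2', one_mul]

lemma spray_even (hU : IsOpen U) (hx : x ∈ U)
    (hAeven : ∀ x' ∈ U, ∀ z, A x' (-z) = A x' z)
    (hAinv : ∀ x' ∈ U, ∀ y : Fin n → ℝ, y ≠ 0 →
      (Matrix.of fun i j => pdy (pdy A j) i x' y) * Ainv x' y = 1 ∧
      Ainv x' y * (Matrix.of fun i j => pdy (pdy A j) i x' y) = 1)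
    (k : Fin n) {y : Fin n → ℝ} (hy : y ≠ 0) :
    sprayG A Ainv k x (-y) = sprayG A Ainv k x y := by
  unfold sprayG
  rw [ainv_even hx hAinv (hAeven x hx) hy]
  congr 1
  refine Finset.sum_congr rfl fun j _ => ?_
  rw [pdx_even hU hx hAeven j y]
  congr 2
  refine Finset.sum_congr rfl fun p _ => ?_
  rw [pdy_pdx_odd hU hx hAeven p j y]
  simp only [Pi.neg_apply]
  ring

lemma meanBerwald_odd (hU : IsOpen U) (hx : x ∈ U)
    (hAeven : ∀ x' ∈ U, ∀ z, A x' (-z) = A x' z)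
    (hAinv : ∀ x' ∈ U, ∀ y : Fin n → ℝ, y ≠ 0 →
      (Matrix.of fun i j => pdy (pdy A j) i x' y) * Ainv x' y = 1 ∧
      Ainv x' y * (Matrix.of fun i j => pdy (pdy A j) i x' y) = 1)
    (i j : Fin n) {y : Fin n → ℝ} (hy : y ≠ 0) :
    meanBerwald A Ainv i j x (-y) = -(meanBerwald A Ainv i j x y) := by
  have key : ∀ k : Fin n, pdy (pdy (pdy (sprayG A Ainv k) k) j) i x (-y)
      = -(pdy (pdy (pdy (sprayG A Ainv k) k) j) i x y) := by
    intro k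
    have h3 : ∀ z : Fin n → ℝ, z ≠ 0 → sprayG A Ainv k x (-z) = sprayG A Ainv k x z :=
      fun z hz => spray_even hU hx hAeven hAinv k hz
    have h2 : ∀ z : Fin n → ℝ, z ≠ 0 →
        pdy (sprayG A Ainv k) k x (-z) = -(pdy (sprayG A Ainv k) k x z) := by
      intro z hz
      show fderiv ℝ (sprayG A Ainv k x) (-z) _ = -(fderiv ℝ (sprayG A Ainv k x) z _)
      exact fderiv_evenOn _ h3 hz _
    have h1 : ∀ z : Fin n → ℝ, z ≠ 0 →
        pdy (pdy (sprayG A Ainv k) k) j x (-z) = pdy (pdy (sprayG A Ainv k) k) j x z := by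
      intro z hz
      show fderiv ℝ (pdy (sprayG A Ainv k) k x) (-z) _ = fderiv ℝ (pdy (sprayG A Ainv k) k x) z _
      exact fderiv_oddOn _ h2 hz _
    show fderiv ℝ (pdy (pdy (sprayG A Ainv k) k) j x) (-y) _
        = -(fderiv ℝ (pdy (pdy (sprayG A Ainv k) k) j x) y _)
    exact fderiv_evenOn _ h1 hy _
  unfold meanBerwald
  simp only [key, Finset.sum_neg_distrib]
  ring

lemma fund_even {m : ℕ} (hAx : ∀ z, A x (-z) = A x z) (i j : Fin n) (z : Fin n → ℝ) :
    fundTensor m A i j x (-z) = fundTensor m A i j x z := by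
  unfold fundTensor
  congr 1
  have hf : ∀ w : Fin n → ℝ, A x (-w) ^ ((2:ℝ)/(m:ℝ)) = A x w ^ ((2:ℝ)/(m:ℝ)) :=
    fun w => by rw [hAx w]
  have hodd : ∀ w v, fderiv ℝ (fun y' => A x y' ^ ((2:ℝ)/(m:ℝ))) (-w) v
      = -(fderiv ℝ (fun y' => A x y' ^ ((2:ℝ)/(m:ℝ))) w v) :=
    fun w v => fderiv_even_global _ hf w v
  show fderiv ℝ (pdy (fun x' y' => A x' y' ^ ((2:ℝ)/(m:ℝ))) j x) (-z) _
      = fderiv ℝ (pdy (fun x' y' => A x' y' ^ ((2:ℝ)/(m:ℝ))) j x) z _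
  exact fderiv_odd_global _ (fun w => hodd w _) z _

lemma angular_even {m : ℕ} (hAx : ∀ z, A x (-z) = A x z) (i j : Fin n) (z : Fin n → ℝ) :
    angularMetric m A i j x (-z) = angularMetric m A i j x z := by
  unfold angularMetric
  rw [hAx z, fund_even hAx i j z]
  have hsum : ∀ p : Fin n, ∀ q : Fin n, True := fun _ _ => trivial
  have h1 : (∑ p, fundTensor m A i p x (-z) * (-z) p)
      = -(∑ p, fundTensor m A i p x z * z p) := by
    rw [← Finset.sum_neg_distrib]
    refine Finset.sum_congr rfl fun p _ => ?_
    rw [fund_even hAx i p z]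
    simp only [Pi.neg_apply]
    ring
  have h2 : (∑ q, fundTensor m A j q x (-z) * (-z) q)
      = -(∑ q, fundTensor m A j q x z * z q) := by
    rw [← Finset.sum_neg_distrib]
    refine Finset.sum_congr rfl fun q _ => ?_
    rw [fund_even hAx j q z]
    simp only [Pi.neg_apply]
    ring
  rw [h1, h2]
  ring

end Parity

/- ## Fundamental tensor formula -/

lemma fund_formula {m : ℕ} {A : (Fin n → ℝ) → (Fin n → ℝ) → ℝ} {x : Fin n → ℝ}
    (hsmooth : ContDiff ℝ (⊤:ℕ∞) (A x))
    (hpos : ∀ z : Fin n → ℝ, z ≠ 0 → 0 < A x z)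
    {y : Fin n → ℝ} (hy : y ≠ 0) (i j : Fin n) :
    fundTensor m A i j x y
      = (1/2) * (((2:ℝ)/(m:ℝ)) *
          (((((2:ℝ)/(m:ℝ)) - 1) * A x y ^ (((2:ℝ)/(m:ℝ)) - 2)
              * fderiv ℝ (A x) y (ee i) * fderiv ℝ (A x) y (ee j))
            + A x y ^ (((2:ℝ)/(m:ℝ)) - 1)
              * fderiv ℝ (fun z => fderiv ℝ (A x) z (ee j)) y (ee i))) := by
  set r : ℝ := (2:ℝ)/(m:ℝ) with hr
  have hd : Differentiable ℝ (A x) := hsmooth.differentiable (by simp)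
  show (1/2) * fderiv ℝ (fun z => fderiv ℝ (fun y' => A x y' ^ r) z (Pi.single j 1)) y
      (Pi.single i 1) = _
  have hstep1 : (fun z => fderiv ℝ (fun y' => A x y' ^ r) z (Pi.single j 1))
      =ᶠ[nhds y] (fun z => r * (A x z ^ (r-1) * fderiv ℝ (A x) z (Pi.single j 1))) := by
    filter_upwards [eventually_ne_zero hy] with z hz
    have h := ((hd z).hasFDerivAt.rpow_const (p := r)
      (Or.inl (ne_of_gt (hpos z hz)))).fderiv
    rw [h]
    simp [mul_assoc]
  rw [hstep1.fderiv_eq]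
  have hb : HasFDerivAt (fun z => fderiv ℝ (A x) z (Pi.single j 1))
      (fderiv ℝ (fun z => fderiv ℝ (A x) z (Pi.single j 1)) y) y :=
    ((pd_smooth hsmooth (Pi.single j 1)).differentiable (by simp) y).hasFDerivAt
  have ha : HasFDerivAt (fun z => A x z ^ (r-1))
      (((r-1) * A x y ^ (r-1-1)) • fderiv ℝ (A x) y) y :=
    (hd y).hasFDerivAt.rpow_const (Or.inl (ne_of_gt (hpos y hy)))
  have hmul := (ha.mul' hb).const_mul r
  rw [show (fun z => r * (A x z ^ (r - 1) * fderiv ℝ (A x) z (Pi.single j 1))) = (fun y => r * ((fun z => A x z ^ (r - 1)) * fun z => fderiv ℝ (A x) z (Pi.single j 1)) y) from rfl, hmul.fderiv]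
  have hrr : r - 1 - 1 = r - 2 := by ring
  unfold ee
  simp only [ContinuousLinearMap.coe_smul', Pi.smul_apply, ContinuousLinearMap.add_apply,
    ContinuousLinearMap.smul_apply, ContinuousLinearMap.smulRight_apply, smul_eq_mul, hrr,
    op_smul_eq_mul]
  ring

/- ## The contraction computation -/

lemma contraction_pos {mR PR : ℝ} (hn : 2 ≤ n) (hm2 : (2:ℝ) ≤ mR) (hP0 : 0 < PR)
    (y Pd : Fin n → ℝ) (Md : Fin n → Fin n → ℝ) (N : Matrix (Fin n) (Fin n) ℝ)
    (fund ang : Fin n → Fin n → ℝ)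
    (hfund : ∀ i j, fund i j = (1/2)*((2/mR)*(((2/mR)-1)*PR^((2/mR)-2)*Pd i*Pd j
        + PR^((2/mR)-1)*Md i j)))
    (hang : ∀ i j, ang i j = fund i j
        - PR^(-(2/mR)) * (∑ p, fund i p * y p) * (∑ q, fund j q * y q))
    (heuler1 : ∑ p, y p * Pd p = mR * PR)
    (hMy : ∀ i, ∑ p, Md i p * y p = (mR-1) * Pd i)
    (hsymm : ∀ i j, Md i j = Md j i)
    (hNM : ∀ i k, ∑ j, N i j * Md j k = if i = k then 1 else 0)
    (hang0 : ∀ i j, ang i j = 0) : False := by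
  have hm0 : mR ≠ 0 := by linarith
  have hm1 : mR - 1 ≠ 0 := by linarith
  set r : ℝ := 2/mR with hr
  have hPP : PR^(r-2) * PR = PR^(r-1) := by
    have h := (Real.rpow_add hP0 (r-2) 1).symm
    rw [Real.rpow_one] at h
    rw [h]
    congr 1
    ring
  have hExp : PR^(-r) * PR^(r-1) * PR^(r-1) * PR = PR^(r-1) := by
    have h1 : PR^(-r) * PR^(r-1) = PR^(-1:ℝ) := by
      rw [← Real.rpow_add hP0]; congr 1; ring
    have h2 : PR^(-1:ℝ) * PR^(r-1) = PR^(r-2) := by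
      rw [← Real.rpow_add hP0]; congr 1; ring
    rw [h1, h2, hPP]
  -- the contracted vector u
  have hu : ∀ i, (∑ p, fund i p * y p) = (1/mR) * PR^(r-1) * Pd i := by
    intro i
    have hterm : ∀ p, fund i p * y p
        = ((1/2)*r*(r-1)*PR^(r-2)*Pd i) * (y p * Pd p)
          + ((1/2)*r*PR^(r-1)) * (Md i p * y p) := by
      intro p; rw [hfund i p]; ring
    rw [Finset.sum_congr rfl (fun p _ => hterm p), Finset.sum_add_distrib,
        ← Finset.mul_sum, ← Finset.mul_sum, heuler1, hMy i]
    have e1 : ((1/2)*r*(r-1)*PR^(r-2)*Pd i) * (mR*PR)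
        = ((1/2)*r*(r-1)*mR*Pd i) * (PR^(r-2)*PR) := by ring
    rw [e1, hPP, hr]
    field_simp
    ring
  -- contraction of N with Pd
  have hNPd : ∀ i, ∑ j, N i j * Pd j = y i / (mR-1) := by
    intro i
    have c1 : ∑ j, N i j * Pd j = (1/(mR-1)) * ∑ j, N i j * (∑ p, Md j p * y p) := by
      rw [Finset.mul_sum]
      refine Finset.sum_congr rfl fun j _ => ?_
      rw [hMy j]
      field_simp
    have c2 : ∑ j, N i j * (∑ p, Md j p * y p) = ∑ p, (∑ j, N i j * Md j p) * y p := by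
      have : ∀ j, N i j * (∑ p, Md j p * y p) = ∑ p, (N i j * Md j p) * y p := by
        intro j
        rw [Finset.mul_sum]
        exact Finset.sum_congr rfl fun p _ => by ring
      rw [Finset.sum_congr rfl (fun j _ => this j), Finset.sum_comm]
      exact Finset.sum_congr rfl fun p _ => (Finset.sum_mul _ _ _).symm
    have c3 : ∑ p, (∑ j, N i j * Md j p) * y p = y i := by
      have : ∀ p, (∑ j, N i j * Md j p) * y p = (if i = p then 1 else 0) * y p := by
        intro p; rw [hNM i p]
      rw [Finset.sum_congr rfl (fun p _ => this p)]
      simp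
    rw [c1, c2, c3]
    ring
  have hSa : ∑ i, ∑ j, Pd i * (N i j * Pd j) = mR * PR / (mR-1) := by
    have c1 : ∀ i, ∑ j, Pd i * (N i j * Pd j) = Pd i * (y i / (mR-1)) := by
      intro i
      rw [← hNPd i, Finset.mul_sum]
    rw [Finset.sum_congr rfl (fun i _ => c1 i)]
    rw [show mR * PR / (mR-1) = (∑ p, y p * Pd p) / (mR-1) by rw [heuler1], Finset.sum_div]
    exact Finset.sum_congr rfl fun i _ => by ring
  have hTr : ∑ i, ∑ j, N i j * Md i j = (n:ℝ) := by
    have c1 : ∀ i, ∑ j, N i j * Md i j = (1:ℝ) := by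
      intro i
      have : ∀ j, N i j * Md i j = N i j * Md j i := fun j => by rw [hsymm i j]
      rw [Finset.sum_congr rfl (fun j _ => this j), hNM i i]
      simp
    rw [Finset.sum_congr rfl (fun i _ => c1 i)]
    simp
  -- the contraction is zero by assumption
  have hzero : ∑ i, ∑ j, N i j * ang i j = 0 := by
    apply Finset.sum_eq_zero
    intro i _
    apply Finset.sum_eq_zero
    intro j _
    rw [hang0 i j, mul_zero]
  -- but it also equals a positive quantity
  have hval : ∑ i, ∑ j, N i j * ang i j = PR^(r-1) * ((n:ℝ)-1) / mR := by
    have hterm : ∀ i j, N i j * ang i j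
        = ((1/2)*r*(r-1)*PR^(r-2)) * (Pd i * (N i j * Pd j))
          + ((1/2)*r*PR^(r-1)) * (N i j * Md i j)
          - (PR^(-r) * ((1/mR)*PR^(r-1)) * ((1/mR)*PR^(r-1))) * (Pd i * (N i j * Pd j)) := by
      intro i j
      rw [hang i j, hfund i j, hu i, hu j]
      ring
    have hsum : ∑ i, ∑ j, N i j * ang i j
        = ((1/2)*r*(r-1)*PR^(r-2)) * (∑ i, ∑ j, Pd i * (N i j * Pd j))
          + ((1/2)*r*PR^(r-1)) * (∑ i, ∑ j, N i j * Md i j)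
          - (PR^(-r) * ((1/mR)*PR^(r-1)) * ((1/mR)*PR^(r-1)))
              * (∑ i, ∑ j, Pd i * (N i j * Pd j)) := by
      rw [Finset.mul_sum, Finset.mul_sum, Finset.mul_sum, ← Finset.sum_add_distrib,
        ← Finset.sum_sub_distrib]
      refine Finset.sum_congr rfl fun i _ => ?_
      rw [Finset.mul_sum, Finset.mul_sum, Finset.mul_sum, ← Finset.sum_add_distrib,
        ← Finset.sum_sub_distrib]
      exact Finset.sum_congr rfl fun j _ => hterm i j
    rw [hsum, hSa, hTr]
    set Q1 : ℝ := PR^(r-1) with hQ1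
    set Q2 : ℝ := PR^(r-2) with hQ2
    set Q3 : ℝ := PR^(-r) with hQ3
    rw [hr]
    field_simp
    linear_combination (2 - mR) * hPP + (-1) * hExp
  rw [hzero] at hval
  have hQpos : 0 < PR^(r-1) := Real.rpow_pos_of_pos hP0 _
  have hn1 : (1:ℝ) ≤ (n:ℝ) - 1 := by
    have : (2:ℝ) ≤ (n:ℝ) := by exact_mod_cast hn
    linarith
  have : 0 < PR^(r-1) * ((n:ℝ)-1) / mR := by positivity
  rw [← hval] at this
  exact lt_irrefl 0 this

/-- An `m`-th root Finsler metric `F = A^{1/m}` on `U ⊆ ℝⁿ`, `n ≥ 2`, of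
isotropic mean Berwald curvature `E_{ij} = ((n+1)/2) c F^{−1} h_{ij}` must have `c = 0`
and `E_{ij} = 0`, i.e. `F` is a weakly Berwald metric. -/
theorem isotropic_mean_berwald_mth_root_is_weakly_berwald
    {n m : ℕ} (hn : 2 ≤ n) (hm : 2 ≤ m)
    (U : Set (Fin n → ℝ)) (hU : IsOpen U)
    (a : (Fin m → Fin n) → (Fin n → ℝ) → ℝ)
    (ha_smooth : ∀ ι, ContDiffOn ℝ (⊤ : ℕ∞) (a ι) U)
    (ha_symm : ∀ (ι : Fin m → Fin n) (σ : Equiv.Perm (Fin m)), a (ι ∘ σ) = a ι)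
    (A : (Fin n → ℝ) → (Fin n → ℝ) → ℝ)
    (hA : ∀ x ∈ U, ∀ y : Fin n → ℝ, A x y = ∑ ι : Fin m → Fin n, a ι x * ∏ k, y (ι k))
    (hApos : ∀ x ∈ U, ∀ y : Fin n → ℝ, y ≠ 0 → 0 < A x y)
    -- (A^{ij}) : the inverse of the Hessian (A_{ij}) = (∂²A/∂y^i∂y^j)
    (Ainv : (Fin n → ℝ) → (Fin n → ℝ) → Matrix (Fin n) (Fin n) ℝ)
    (hAinv : ∀ x ∈ U, ∀ y : Fin n → ℝ, y ≠ 0 →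
      (Matrix.of fun i j => pdy (pdy A j) i x y) * Ainv x y = 1 ∧
      Ainv x y * (Matrix.of fun i j => pdy (pdy A j) i x y) = 1)
    -- F is of isotropic mean Berwald curvature: E_{ij} = ((n+1)/2) c(x) F^{−1} h_{ij}
    (c : (Fin n → ℝ) → ℝ)
    (hc_smooth : ContDiffOn ℝ (⊤ : ℕ∞) c U)
    (hiso : ∀ x ∈ U, ∀ y : Fin n → ℝ, y ≠ 0 → ∀ i j : Fin n,
      meanBerwald A Ainv i j x y
        = (((n : ℝ) + 1) / 2) * c x * A x y ^ (-(1 : ℝ) / (m : ℝ)) *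
            angularMetric m A i j x y) :
    (∀ x ∈ U, c x = 0) ∧
    (∀ x ∈ U, ∀ y : Fin n → ℝ, y ≠ 0 → ∀ i j : Fin n,
      meanBerwald A Ainv i j x y = 0) := by
  have key : ∀ x ∈ U, c x = 0 ∧ (∀ y : Fin n → ℝ, y ≠ 0 → ∀ i j : Fin n,
      meanBerwald A Ainv i j x y = 0) := by
    intro x hx
    have hP : ∀ z, A x z = ∑ ι : Fin m → Fin n, a ι x * ∏ k, z (ι k) := hA x hx
    have hsmooth : ContDiff ℝ (⊤:ℕ∞) (A x) := by
      have hfun : A x = fun z => ∑ ι : Fin m → Fin n, a ι x * ∏ k, z (ι k) := funext hP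
      rw [hfun]; exact poly_contDiff _
    have hhom : ∀ (t : ℝ) (z : Fin n → ℝ), A x (t • z) = t ^ m * A x z := by
      intro t z; rw [hP, hP]; exact poly_homog _ t z
    have hposx : ∀ z : Fin n → ℝ, z ≠ 0 → 0 < A x z := fun z hz => hApos x hx z hz
    have hn0 : (0:ℕ) < n := by omega
    set y0 : Fin n → ℝ := Pi.single ⟨0, hn0⟩ 1 with hy0def
    have hy0 : y0 ≠ 0 := by
      intro h
      have := congrFun h ⟨0, hn0⟩
      rw [hy0def] at this
      simp at this
    -- m must be even
    have hmeven : Even m := by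
      by_contra hodd
      have hodd' : Odd m := Nat.odd_iff.mpr (Nat.not_even_iff.mp hodd)
      have h1 : A x (-y0) = -(A x y0) := by
        have h2 := hhom (-1) y0
        rw [neg_one_smul] at h2
        rw [h2, Odd.neg_one_pow hodd']
        ring
      have p1 := hposx y0 hy0
      have p2 := hposx (-y0) (neg_ne_zero.mpr hy0)
      linarith
    -- A is even in y on U
    have hAeven : ∀ x' ∈ U, ∀ z, A x' (-z) = A x' z := by
      intro x' hx' z
      have hP' := hA x' hx'
      have hh : A x' ((-1:ℝ) • z) = (-1:ℝ)^m * A x' z := by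
        rw [hP', hP']; exact poly_homog _ (-1) z
      rw [neg_one_smul] at hh
      rw [hh, Even.neg_one_pow hmeven, one_mul]
    -- the mean Berwald curvature vanishes
    have hE0 : ∀ y : Fin n → ℝ, y ≠ 0 → ∀ i j, meanBerwald A Ainv i j x y = 0 := by
      intro y hy i j
      have h1 := hiso x hx y hy i j
      have h2 := hiso x hx (-y) (neg_ne_zero.mpr hy) i j
      rw [meanBerwald_odd hU hx hAeven hAinv i j hy,
          angular_even (hAeven x hx) i j y, hAeven x hx y] at h2
      linarith
    refine ⟨?_, hE0⟩
    by_contra hc0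
    -- the angular metric vanishes at y0
    have hang0 : ∀ i j, angularMetric m A i j x y0 = 0 := by
      intro i j
      have h1 := hiso x hx y0 hy0 i j
      rw [hE0 y0 hy0 i j] at h1
      have hne : ((n:ℝ)+1)/2 * c x * A x y0 ^ (-(1:ℝ)/(m:ℝ)) ≠ 0 := by
        have hp := Real.rpow_pos_of_pos (hposx y0 hy0) (-(1:ℝ)/(m:ℝ))
        have hn1 : ((n:ℝ)+1)/2 ≠ 0 := by positivity
        exact mul_ne_zero (mul_ne_zero hn1 hc0) (ne_of_gt hp)
      exact (mul_eq_zero.mp h1.symm).resolve_left hne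
    -- derive a contradiction via the contraction with Ainv
    have hm1 : 1 ≤ m := by omega
    have hmR : (2:ℝ) ≤ (m:ℝ) := by exact_mod_cast hm
    refine contraction_pos (mR := (m:ℝ)) (PR := A x y0) hn hmR (hposx y0 hy0) y0
      (fun i => fderiv ℝ (A x) y0 (ee i))
      (fun i j => fderiv ℝ (fun z => fderiv ℝ (A x) z (ee j)) y0 (ee i))
      (Ainv x y0)
      (fun i j => fundTensor m A i j x y0)
      (fun i j => angularMetric m A i j x y0)
      ?_ ?_ ?_ ?_ ?_ ?_ hang0
    · exact fun i j => fund_formula hsmooth hposx hy0 i j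
    · exact fun i j => rfl
    · exact euler_coord hsmooth hhom y0
    · intro i
      have hs : ∀ p, fderiv ℝ (fun z => fderiv ℝ (A x) z (ee p)) y0 (ee i)
          = fderiv ℝ (fun z => fderiv ℝ (A x) z (ee i)) y0 (ee p) :=
        fun p => second_symm hsmooth y0 (ee p) (ee i)
      calc ∑ p, fderiv ℝ (fun z => fderiv ℝ (A x) z (ee p)) y0 (ee i) * y0 p
          = ∑ p, y0 p * fderiv ℝ (fun z => fderiv ℝ (A x) z (ee i)) y0 (ee p) := by
            refine Finset.sum_congr rfl fun p _ => ?_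
            rw [hs p]; ring
        _ = ((m:ℝ) - 1) * fderiv ℝ (A x) y0 (ee i) :=
            euler_coord_deriv hm1 hsmooth hhom y0 (ee i)
    · exact fun i j => second_symm hsmooth y0 (ee j) (ee i)
    · intro i k
      have h := (hAinv x hx y0 hy0).2
      have h2 : (Ainv x y0 * Matrix.of fun i j => pdy (pdy A j) i x y0) i k
          = (1 : Matrix (Fin n) (Fin n) ℝ) i k := by rw [h]
      rw [Matrix.mul_apply, Matrix.one_apply] at h2
      convert h2 using 1
      rfl
  exact ⟨fun x hx => (key x hx).1, fun x hx => (key x hx).2⟩
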